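/- Let G be a finite tree (a simple connected acyclic undirected graph) with at least 2 nodes. Then for the majority game on G, the set of all leaf nodes (nodes of degree 1) is a sufficient control set. -/

import Mathlib

open Finset

/-- The indicator strategy profile `𝟙_S` of a set of players `S`: action `1` (here `true`)
on `S` and `0` (here `false`) elsewhere. -/
def indicator {V : Type*} [DecidableEq V] (S : Finset V) : V → Bool :=
  fun i => decide (i ∈ S)

/-- A finite binary-action game with utilities `u` is super-modular (has increasing
differences) if for every player `i` and profiles `x, y` with `x_{-i} ≥ y_{-i}`
componentwise, `u_i(1, x_{-i}) − u_i(0, x_{-i}) ≥ u_i(1, y_{-i}) − u_i(0, y_{-i})`. -/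
def Supermodular {V : Type*} [DecidableEq V] (u : V → (V → Bool) → ℝ) : Prop :=
  ∀ (i : V) (x y : V → Bool), (∀ j, j ≠ i → y j ≤ x j) →
    u i (Function.update y i true) - u i (Function.update y i false) ≤
      u i (Function.update x i true) - u i (Function.update x i false)

/-- An improvement path from `S` to `T`: a sequence of profiles starting at `𝟙_S` and ending
at `𝟙_T` such that at each step some player `i ∉ S` flips her action (the profile changes
exactly in coordinate `i`) without decreasing her utility. -/
def IsImprovementPath {V : Type*} [Fintype V] [DecidableEq V]
    (u : V → (V → Bool) → ℝ) (S T : Finset V) : Prop :=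
  ∃ (m : ℕ) (x : ℕ → V → Bool),
    x 0 = indicator S ∧ x m = indicator T ∧
    ∀ k < m, ∃ i, i ∉ S ∧
      x (k + 1) = Function.update (x k) i (!(x k i)) ∧
      u i (x k) ≤ u i (x (k + 1))

/-- `S` is a sufficient control set if there is an improvement path from `S` to the whole
player set `V`. -/
def SufficientControlSet {V : Type*} [Fintype V] [DecidableEq V]
    (u : V → (V → Bool) → ℝ) (S : Finset V) : Prop :=
  IsImprovementPath u S Finset.univ

/-- Utilities of the majority game on a finite simple undirected graph `G`: the utility of
player `i` at profile `x` is the number of neighbors `j` of `i` with `x_j = x_i`. -/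
def majU {V : Type*} [Fintype V] [DecidableEq V] (G : SimpleGraph V) [DecidableRel G.Adj] :
    V → (V → Bool) → ℝ :=
  fun i x => ((G.neighborFinset i).filter (fun j => x j = x i)).card

/-!
Flip the non-leaf vertices to `1` one at a time, always choosing, among the vertices still at
`0`, one farthest from a root `r` in its component. Every neighbour of that vertex lying farther
from `r` already plays `1`, and in a forest at most one neighbour lies no farther from `r` than it
does (its parent). So at most one neighbour plays `0`, and, the degree not being `1`, at least as
many play `1`: the flip does not lower the player's utility.
-/

lemma indicator_insert {V : Type*} [DecidableEq V] (T : Finset V) (i : V) :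
    indicator (insert i T) = Function.update (indicator T) i true := by
  funext j
  by_cases hj : j = i <;> simp [indicator, hj]

section ImprovementPath

variable {V : Type*} [Fintype V] [DecidableEq V] {u : V → (V → Bool) → ℝ} {S T : Finset V} {i : V}

lemma IsImprovementPath.refl (u : V → (V → Bool) → ℝ) (S : Finset V) :
    IsImprovementPath u S S :=
  ⟨0, fun _ => indicator S, rfl, rfl, by simp⟩

lemma IsImprovementPath.insert_of_le (hST : IsImprovementPath u S T) (hiS : i ∉ S) (hiT : i ∉ T)
    (hu : u i (indicator T) ≤ u i (indicator (insert i T))) :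
    IsImprovementPath u S (insert i T) := by
  obtain ⟨m, x, hx0, hxm, hstep⟩ := hST
  refine ⟨m + 1, Function.update x (m + 1) (indicator (insert i T)), ?_, by simp, ?_⟩
  · simpa [Function.update_apply] using hx0
  intro k hk
  rcases Nat.lt_succ_iff_lt_or_eq.1 hk with hk | rfl
  · have hk₁ : k ≠ m + 1 := by omega
    simpa [Function.update_apply, hk₁, hk.ne] using hstep k hk
  · refine ⟨i, hiS, ?_, ?_⟩
    · simp [hxm, indicator_insert, indicator, hiT]
    · simpa [hxm] using hu

lemma IsImprovementPath.to_univ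
    (h : ∀ T, S ⊆ T → T ≠ univ → ∃ i ∉ T, u i (indicator T) ≤ u i (indicator (insert i T)))
    (T : Finset V) (hST : S ⊆ T) (hT : IsImprovementPath u S T) :
    IsImprovementPath u S univ := by
  by_cases hTu : T = univ
  · exact hTu ▸ hT
  obtain ⟨i, hiT, hi⟩ := h T hST hTu
  exact to_univ h (insert i T) (hST.trans (subset_insert i T))
    (hT.insert_of_le (fun hiS => hiT (hST hiS)) hiT hi)
termination_by #Tᶜ
decreasing_by exact card_lt_card (compl_ssubset_compl.2 (ssubset_insert hiT))

theorem sufficientControlSet_of_forall_exists_le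
    (h : ∀ T, S ⊆ T → T ≠ univ → ∃ i ∉ T, u i (indicator T) ≤ u i (indicator (insert i T))) :
    SufficientControlSet u S :=
  IsImprovementPath.to_univ h S subset_rfl (.refl u S)

end ImprovementPath

namespace SimpleGraph

variable {V : Type*} {G : SimpleGraph V}

lemma IsAcyclic.eq_of_adj_of_dist_le (hG : G.IsAcyclic) {r v w₁ w₂ : V} (hr : G.Reachable r v)
    (h₁ : G.Adj v w₁) (h₂ : G.Adj v w₂)
    (hd₁ : G.dist r w₁ ≤ G.dist r v) (hd₂ : G.dist r w₂ ≤ G.dist r v) : w₁ = w₂ := by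
  classical
  have shortest_concat : ∀ w (h : G.Adj v w), G.dist r w ≤ G.dist r v →
      ∃ p : G.Walk r w, (p.concat h.symm).IsPath := by
    intro w h hd
    have hlt : G.dist r w < G.dist r v := lt_of_le_of_ne hd (hG.dist_ne_of_adj h hr).symm
    obtain ⟨p, hp, hlen⟩ := (hr.trans h.reachable).exists_path_of_dist
    refine ⟨p, hp.concat (fun hv => ?_) h.symm⟩
    have := (dist_le (p.takeUntil v hv)).trans (p.length_takeUntil_le_length hv)
    omega
  obtain ⟨p₁, hp₁⟩ := shortest_concat w₁ h₁ hd₁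
  obtain ⟨p₂, hp₂⟩ := shortest_concat w₂ h₂ hd₂
  have hp : p₁.concat h₁.symm = p₂.concat h₂.symm :=
    congrArg Subtype.val ((hG.subsingleton_path r v).elim ⟨_, hp₁⟩ ⟨_, hp₂⟩)
  simpa using congrArg Walk.penultimate hp

variable [Fintype V] [DecidableEq V] [DecidableRel G.Adj]

lemma majU_indicator_le_insert {T : Finset V} {i : V} (hi : i ∉ T)
    (h : #(G.neighborFinset i \ T) ≤ #(G.neighborFinset i ∩ T)) :
    majU G i (indicator T) ≤ majU G i (indicator (insert i T)) := by
  have h₀ : {j ∈ G.neighborFinset i | indicator T j = indicator T i} =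
      G.neighborFinset i \ T := by
    ext j
    simp [indicator, hi]
  have h₁ : {j ∈ G.neighborFinset i | indicator (insert i T) j = indicator (insert i T) i} =
      G.neighborFinset i ∩ T := by
    ext j
    simp only [mem_filter, mem_neighborFinset, indicator, mem_insert, mem_inter]
    exact and_congr_right fun hij => by simp [hij.ne']
  simp only [majU, h₀, h₁]
  exact_mod_cast h

lemma IsAcyclic.exists_majU_indicator_le_insert (hG : G.IsAcyclic) {T : Finset V}
    (hleaves : ({v | G.degree v = 1} : Finset V) ⊆ T) (hT : T ≠ univ) :
    ∃ i ∉ T, majU G i (indicator T) ≤ majU G i (indicator (insert i T)) := by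
  classical
  obtain ⟨r, hr⟩ : ∃ r, r ∉ T := by simpa [eq_univ_iff_forall] using hT
  obtain ⟨i, hi, hmax⟩ := exists_max_image {v | v ∉ T ∧ G.Reachable r v} (G.dist r)
    ⟨r, by simp [hr]⟩
  obtain ⟨hiT, hri⟩ : i ∉ T ∧ G.Reachable r i := by simpa using hi
  refine ⟨i, hiT, majU_indicator_le_insert hiT ?_⟩
  have hparent : #(G.neighborFinset i \ T) ≤ 1 := by
    have hshallow : ∀ w ∈ G.neighborFinset i \ T, G.Adj i w ∧ G.dist r w ≤ G.dist r i := by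
      intro w hw
      rw [mem_sdiff, mem_neighborFinset] at hw
      exact ⟨hw.1, hmax w (by simp [hw.2, hri.trans hw.1.reachable])⟩
    refine card_le_one.2 fun a ha b hb => ?_
    obtain ⟨hia, hda⟩ := hshallow a ha
    obtain ⟨hib, hdb⟩ := hshallow b hb
    exact hG.eq_of_adj_of_dist_le hri hia hib hda hdb
  have hdeg : #(G.neighborFinset i \ T) + #(G.neighborFinset i ∩ T) ≠ 1 := by
    rw [card_sdiff_add_card_inter, card_neighborFinset_eq_degree]
    exact fun h => hiT (hleaves (by simp [h]))
  omega

end SimpleGraph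

theorem tree_leaves_sufficient_general
    {V : Type*} [Fintype V] [DecidableEq V]
    (G : SimpleGraph V) [DecidableRel G.Adj]
    (htree : G.IsTree) :
    SufficientControlSet (majU G) (Finset.univ.filter fun v => G.degree v = 1) :=
  sufficientControlSet_of_forall_exists_le fun _ hleaves hT =>
    htree.isAcyclic.exists_majU_indicator_le_insert hleaves hT

/-- For the majority game on a finite tree (a simple connected acyclic undirected graph)
with at least two nodes, the set of all leaf nodes (nodes of degree `1`) is a sufficient
control set. -/
theorem tree_leaves_sufficient
    {V : Type*} [Fintype V] [DecidableEq V]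
    (G : SimpleGraph V) [DecidableRel G.Adj]
    (htree : G.IsTree) (hcard : 2 ≤ Fintype.card V) :
    SufficientControlSet (majU G) (Finset.univ.filter fun v => G.degree v = 1) :=
  tree_leaves_sufficient_general G htree
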